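/- arXiv:1410.3076 — 2 statements merged into one kernel-verified Lean document; each statement's English description precedes it below -/
import Mathlib

section
/- Let n > 2s, z₀(x) = α(1+|x|²)^{-(n-2s)/2}, 0 < q < (n+2s)/(n−2s), γ_s := (n−2s)(q+1)/2, and let h : ℝⁿ → ℝ be continuous with compact support. Define Γ(μ,ξ) := μ^{-γ_s}/(q+1) · ∫_{ℝⁿ} h(x) z₀((x−ξ)/μ)^{q+1} dx for μ > 0. Then Γ(μ,ξ) → 0 as μ → 0, uniformly in ξ ∈ ℝⁿ. -/
/-!
Writing `β = (n - 2s)(q + 1)/2`, the integrand of `Γ(μ, ξ)` is `h(x) α^{q+1} (1 + |x - ξ|²/μ²)^{-β}`.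
For `0 ≤ p ≤ 2β` one has `(1 + T)^{-β} ≤ T^{-p/2}`, so the integrand is at most
`α^{q+1} μ^p |h(x)| |x - ξ|^{-p}`. Since `β < n`, one can pick `β < p < min(n, 2β)`: then `|·|^{-p}`
is integrable near `0`, which bounds `∫ |h(x)| |x - ξ|^{-p} dx` uniformly in `ξ`, and
`|Γ(μ, ξ)| ≤ C μ^{p - β}` with `p - β > 0`.
-/

open Real MeasureTheory Set Metric Module

theorem one_add_rpow_neg_le_rpow_neg {T β δ : ℝ} (hT : 0 < T) (hδ : 0 ≤ δ) (hδβ : δ ≤ β) :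
    (1 + T) ^ (-β) ≤ T ^ (-δ) :=
  calc (1 + T) ^ (-β) ≤ (1 + T) ^ (-δ) :=
        rpow_le_rpow_of_exponent_le (le_add_of_nonneg_right hT.le) (neg_le_neg hδβ)
    _ ≤ T ^ (-δ) := rpow_le_rpow_of_nonpos hT (le_add_of_nonneg_left zero_le_one) (neg_nonpos.2 hδ)

theorem one_add_norm_inv_smul_sq_rpow_neg_le {E : Type*} [SeminormedAddCommGroup E]
    [NormedSpace ℝ E] {μ β p : ℝ} {y : E} (hμ : 0 < μ) (hy : 0 < ‖y‖) (hp : 0 ≤ p)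
    (hpβ : p ≤ 2 * β) :
    (1 + ‖μ⁻¹ • y‖ ^ 2) ^ (-β) ≤ μ ^ p * ‖y‖ ^ (-p) := by
  have hμy : 0 < ‖μ⁻¹ • y‖ := by
    rw [norm_smul, norm_inv, Real.norm_of_nonneg hμ.le]; positivity
  calc (1 + ‖μ⁻¹ • y‖ ^ 2) ^ (-β) ≤ (‖μ⁻¹ • y‖ ^ 2) ^ (-(p / 2)) :=
        one_add_rpow_neg_le_rpow_neg (by positivity) (by positivity) (by linarith)
    _ = μ ^ p * ‖y‖ ^ (-p) := by
        rw [← rpow_natCast, ← rpow_mul hμy.le, norm_smul, norm_inv, Real.norm_of_nonneg hμ.le,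
          mul_rpow (by positivity) hy.le, inv_rpow hμ.le, ← rpow_neg hμ.le]
        push_cast
        ring_nf

theorem mul_one_add_norm_inv_smul_sq_rpow_le {E : Type*} [SeminormedAddCommGroup E]
    [NormedSpace ℝ E] {μ α a r p : ℝ} {y : E} (hμ : 0 < μ) (hα : 0 ≤ α) (hy : 0 < ‖y‖)
    (hp : 0 ≤ p) (hpar : p ≤ a * r) :
    (α * (1 + ‖μ⁻¹ • y‖ ^ 2) ^ (-a / 2)) ^ r ≤ α ^ r * (μ ^ p * ‖y‖ ^ (-p)) := by
  rw [mul_rpow hα (by positivity), ← rpow_mul (by positivity),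
    show -a / 2 * r = -(a * r / 2) by ring]
  gcongr
  exact one_add_norm_inv_smul_sq_rpow_neg_le hμ hy hp (by linarith)

theorem mul_rpow_neg_norm_le_add_indicator {E : Type*} [SeminormedAddCommGroup E]
    {a M p : ℝ} (ha : 0 ≤ a) (haM : a ≤ M) (hp : 0 ≤ p) (y : E) :
    a * ‖y‖ ^ (-p) ≤ a + M * (ball 0 1).indicator (fun y => ‖y‖ ^ (-p)) y := by
  by_cases hy : y ∈ ball (0 : E) 1
  · rw [indicator_of_mem hy]
    nlinarith [rpow_nonneg (norm_nonneg y) (-p)]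
  · rw [indicator_of_notMem hy, mul_zero, add_zero]
    have : 1 ≤ ‖y‖ := by simpa using hy
    exact mul_le_of_le_one_right ha (rpow_le_one_of_one_le_of_nonpos this (neg_nonpos.2 hp))

theorem exists_forall_abs_lt_of_abs_le_mul_rpow {ι : Type*} {F : ℝ → ι → ℝ} {A e : ℝ}
    (he : 0 < e) (hF : ∀ μ > 0, ∀ i, |F μ i| ≤ A * μ ^ e) :
    ∀ ε > 0, ∃ μbar > 0, ∀ μ : ℝ, 0 < μ → μ < μbar → ∀ i, |F μ i| < ε := by
  have hlim : Filter.Tendsto (fun μ : ℝ => A * μ ^ e) (nhds 0) (nhds 0) := by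
    simpa [zero_rpow he.ne'] using
      ((continuousAt_rpow_const 0 e (Or.inr he.le)).const_mul A).tendsto
  intro ε hε
  obtain ⟨μbar, hμbar, hball⟩ := Metric.tendsto_nhds_nhds.1 hlim ε hε
  refine ⟨μbar, hμbar, fun μ hμ hμμbar i => (hF μ hμ i).trans_lt ?_⟩
  have := hball (x := μ) (by rwa [Real.dist_0_eq_abs, abs_of_pos hμ])
  rw [dist_zero_right, Real.norm_eq_abs] at this
  exact (le_abs_self _).trans_lt this

section HaarMeasure

variable {E G : Type*} [NormedAddCommGroup E] [NormedSpace ℝ E] [FiniteDimensional ℝ E]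
  [MeasurableSpace E] [BorelSpace E] {ν : Measure E} [ν.IsAddHaarMeasure]
  [NormedAddCommGroup G] [NormedSpace ℝ G]

theorem integrableOn_ball_rpow_neg_norm {p : ℝ} (hp : 0 ≤ p) (hpd : p < finrank ℝ E) :
    IntegrableOn (fun y : E => ‖y‖ ^ (-p)) (ball 0 1) ν := by
  refine integrableOn_ball_of_norm_le_rpow (C := 1) ?_ hpd (ae_of_all _ fun y => ?_)
    (continuous_norm.measurable.pow_const _).aestronglyMeasurable
  · exact_mod_cast (hp.trans_lt hpd)
  · rw [one_mul, Real.norm_of_nonneg (rpow_nonneg (norm_nonneg y) _)]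

theorem norm_integral_le_of_norm_le_mul_rpow_neg_norm_sub {f : E → ℝ} {Φ : E → G} {p M K : ℝ}
    (hp : 0 ≤ p) (hpd : p < finrank ℝ E) (hf : Integrable f ν) (hM : ∀ x, ‖f x‖ ≤ M)
    (hK : 0 ≤ K) (ξ : E) (hΦ : ∀ᵐ x ∂ν, ‖Φ x‖ ≤ K * ‖f x‖ * ‖x - ξ‖ ^ (-p)) :
    ‖∫ x, Φ x ∂ν‖ ≤ K * ((∫ x, ‖f x‖ ∂ν) + M * ∫ y in ball 0 1, ‖y‖ ^ (-p) ∂ν) := by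
  set W := (ball (0 : E) 1).indicator fun y => ‖y‖ ^ (-p)
  have hW : Integrable W ν :=
    (integrable_indicator_iff measurableSet_ball).2 (integrableOn_ball_rpow_neg_norm hp hpd)
  have hG : Integrable (fun x => K * (‖f x‖ + M * W (x - ξ))) ν :=
    (hf.norm.add ((hW.comp_sub_right ξ).const_mul M)).const_mul K
  refine (norm_integral_le_of_norm_le hG ?_).trans_eq ?_
  · filter_upwards [hΦ] with x hx
    rw [mul_assoc] at hx
    exact hx.trans (mul_le_mul_of_nonneg_left
      (mul_rpow_neg_norm_le_add_indicator (norm_nonneg _) (hM x) hp _) hK)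
  · rw [integral_const_mul, integral_add hf.norm ((hW.comp_sub_right ξ).const_mul M),
      integral_const_mul, integral_sub_right_eq_self W ξ, integral_indicator measurableSet_ball]

theorem abs_integral_mul_one_add_norm_inv_smul_sq_rpow_le {f : E → ℝ} {M α a r p μ : ℝ}
    (hf : Integrable f ν) (hM : ∀ x, ‖f x‖ ≤ M) (hα : 0 ≤ α) (hp : 0 ≤ p)
    (hpd : p < finrank ℝ E) (hpar : p ≤ a * r) (hμ : 0 < μ) (ξ : E) :
    |∫ x, f x * (α * (1 + ‖μ⁻¹ • (x - ξ)‖ ^ 2) ^ (-a / 2)) ^ r ∂ν| ≤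
      α ^ r * μ ^ p * ((∫ x, ‖f x‖ ∂ν) + M * ∫ y in ball 0 1, ‖y‖ ^ (-p) ∂ν) := by
  have : Nontrivial E := nontrivial_of_finrank_pos (R := ℝ) (by exact_mod_cast hp.trans_lt hpd)
  rw [← Real.norm_eq_abs]
  refine norm_integral_le_of_norm_le_mul_rpow_neg_norm_sub hp hpd hf hM (by positivity) ξ ?_
  filter_upwards [compl_mem_ae_iff.2 (measure_singleton ξ)] with x hx
  have hxξ : 0 < ‖x - ξ‖ := norm_pos_iff.2 (sub_ne_zero.2 hx)
  rw [norm_mul, Real.norm_of_nonneg (rpow_nonneg (by positivity) _)]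
  calc ‖f x‖ * _ ≤ ‖f x‖ * (α ^ r * (μ ^ p * ‖x - ξ‖ ^ (-p))) := by
        gcongr; exact mul_one_add_norm_inv_smul_sq_rpow_le hμ hα hxξ hp hpar
    _ = _ := by ring

end HaarMeasure

theorem stmt10_general (d : ℕ) (s q α : ℝ) (hn : 2 * s < (d : ℝ))
    (hq : 0 < q) (hq' : q < ((d : ℝ) + 2 * s) / ((d : ℝ) - 2 * s)) (hα : 0 < α)
    (h : EuclideanSpace ℝ (Fin d) → ℝ) (hc : Continuous h) (hsupp : HasCompactSupport h) :
    ∀ ε > 0, ∃ μbar > 0, ∀ μ : ℝ, 0 < μ → μ < μbar → ∀ ξ : EuclideanSpace ℝ (Fin d),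
      |μ ^ (-(((d : ℝ) - 2 * s) * (q + 1) / 2)) / (q + 1) *
        ∫ x, h x * (α * (1 + ‖μ⁻¹ • (x - ξ)‖ ^ 2) ^ (-((d : ℝ) - 2 * s) / 2)) ^ (q + 1)|
        < ε := by
  set β := ((d : ℝ) - 2 * s) * (q + 1) / 2 with hβ_def
  have hds : 0 < (d : ℝ) - 2 * s := by linarith
  have hβ : 0 < β := by positivity
  have hβd : β < d := by linarith [(lt_div_iff₀ hds).1 hq']
  obtain ⟨p, hβp, hp⟩ := exists_between (lt_min hβd (by linarith : β < 2 * β))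
  obtain ⟨hpd, hpβ⟩ := lt_min_iff.1 hp
  have hdim : (finrank ℝ (EuclideanSpace ℝ (Fin d)) : ℝ) = d := by simp
  obtain ⟨M, hM⟩ := hsupp.exists_bound_of_continuous hc
  set C := (∫ x, ‖h x‖) + M * ∫ y in ball (0 : EuclideanSpace ℝ (Fin d)) 1, ‖y‖ ^ (-p)
  refine exists_forall_abs_lt_of_abs_le_mul_rpow (A := α ^ (q + 1) / (q + 1) * C)
    (sub_pos.2 hβp) fun μ hμ ξ => ?_
  have hI := abs_integral_mul_one_add_norm_inv_smul_sq_rpow_le (ν := volume) (α := α)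
    (r := q + 1) (hc.integrable_of_hasCompactSupport hsupp) hM hα.le (by linarith) (hdim ▸ hpd)
    (by linarith : p ≤ ((d : ℝ) - 2 * s) * (q + 1)) hμ ξ
  rw [abs_mul, abs_of_pos (by positivity : 0 < μ ^ (-β) / (q + 1))]
  calc _ ≤ μ ^ (-β) / (q + 1) * (α ^ (q + 1) * μ ^ p * C) := by gcongr
    _ = _ := by rw [rpow_sub hμ, rpow_neg hμ.le]; field_simp

/-- The reduced functional
`Γ(μ,ξ) = μ^{−γ_s}/(q+1) ∫ h(x) z₀((x−ξ)/μ)^{q+1} dx` tends to `0` as `μ → 0`,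
uniformly in `ξ`. Here `γ_s = (n−2s)(q+1)/2` and `z₀(x) = α(1+|x|²)^{−(n−2s)/2}`. -/
theorem stmt10 (d : ℕ) (s q α : ℝ) (hs : 0 < s) (hn : 2 * s < (d : ℝ))
    (hq : 0 < q) (hq' : q < ((d : ℝ) + 2 * s) / ((d : ℝ) - 2 * s)) (hα : 0 < α)
    (h : EuclideanSpace ℝ (Fin d) → ℝ) (hc : Continuous h) (hsupp : HasCompactSupport h) :
    ∀ ε > 0, ∃ μbar > 0, ∀ μ : ℝ, 0 < μ → μ < μbar → ∀ ξ : EuclideanSpace ℝ (Fin d),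
      |μ ^ (-(((d : ℝ) - 2 * s) * (q + 1) / 2)) / (q + 1) *
        ∫ x, h x * (α * (1 + ‖μ⁻¹ • (x - ξ)‖ ^ 2) ^ (-((d : ℝ) - 2 * s) / 2)) ^ (q + 1)|
        < ε :=
  stmt10_general d s q α hn hq hq' hα h hc hsupp
end

section
/- Let n > 2s, 0 < q ≤ 2s/(n−2s), h : ℝⁿ → ℝ continuous, compactly supported, nonnegative, and h(ξ₀) > 0 for some ξ₀. With Γ as above, lim_{μ→0} Γ(μ,ξ₀)/μ^{n−γ_s} = +∞. -/
/-!
Substituting `x = ξ₀ + μ y` turns the quotient into `(q+1)⁻¹ ∫ h(ξ₀ + μ y) G(y) dy` with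
`G(y) = α^{q+1} (1 + |y|²)^{-(n-2s)(q+1)/2}`. Since `(n-2s)(q+1) ≤ n`, `G` is not integrable
(in polar coordinates it dominates a multiple of `1/t` at infinity), so `∫_{|y|<R} G` is unbounded
in `R`; and `h(ξ₀ + μ y) ≥ h(ξ₀)/2` for `|y| < R` once `μ R` is small.
-/

open Real MeasureTheory Set Filter Metric Module

lemma inv_le_two_rpow_mul_pow_mul_one_add_sq_rpow {n : ℕ} (hn : 1 ≤ n) {t : ℝ} (ht : 1 ≤ t) :
    t⁻¹ ≤ 2 ^ ((n : ℝ) / 2) * (t ^ (n - 1) * (1 + t ^ 2) ^ (-(n : ℝ) / 2)) := by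
  have ht0 : 0 < t := by linarith
  have hpow : (2 * t ^ 2) ^ ((n : ℝ) / 2) = 2 ^ ((n : ℝ) / 2) * t ^ n := by
    rw [mul_rpow zero_le_two (by positivity), ← rpow_natCast t 2, ← rpow_mul ht0.le,
      ← rpow_natCast t n]
    ring_nf
  calc t⁻¹ = 2 ^ ((n : ℝ) / 2) * (t ^ (n - 1) * (2 * t ^ 2) ^ (-(n : ℝ) / 2)) := by
        rw [neg_div, rpow_neg (by positivity), hpow, ← pow_sub_one_mul (show n ≠ 0 by omega) t]
        field_simp
    _ ≤ 2 ^ ((n : ℝ) / 2) * (t ^ (n - 1) * (1 + t ^ 2) ^ (-(n : ℝ) / 2)) := by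
        have hle : (2 * t ^ 2) ^ (-(n : ℝ) / 2) ≤ (1 + t ^ 2) ^ (-(n : ℝ) / 2) :=
          rpow_le_rpow_of_nonpos (by positivity) (by nlinarith)
            (by rw [neg_div]; exact neg_nonpos.2 (by positivity))
        gcongr

theorem not_integrable_rpow_neg_one_add_norm_sq {E : Type*} [NormedAddCommGroup E]
    [NormedSpace ℝ E] [Nontrivial E] [FiniteDimensional ℝ E] [MeasurableSpace E] [BorelSpace E]
    (ν : Measure E) [ν.IsAddHaarMeasure] {r : ℝ} (hr : r ≤ finrank ℝ E) :
    ¬ Integrable (fun x : E ↦ (1 + ‖x‖ ^ 2) ^ (-r / 2)) ν := by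
  set n := finrank ℝ E
  intro hint
  have hdim : Integrable (fun x : E ↦ (1 + ‖x‖ ^ 2) ^ (-(n : ℝ) / 2)) ν := by
    refine hint.mono' (Measurable.aestronglyMeasurable (by fun_prop)) (ae_of_all _ fun x ↦ ?_)
    rw [norm_of_nonneg (by positivity)]
    exact rpow_le_rpow_of_exponent_le (le_add_of_nonneg_right (by positivity)) (by linarith)
  rw [integrable_fun_norm_addHaar ν (f := fun t : ℝ ↦ (1 + t ^ 2) ^ (-(n : ℝ) / 2))] at hdim
  apply not_integrableOn_Ioi_inv (a := 1)
  refine ((hdim.mono_set (Ioi_subset_Ioi zero_le_one)).const_mul (2 ^ ((n : ℝ) / 2))).mono'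
    (by fun_prop) ?_
  refine (ae_restrict_iff' measurableSet_Ioi).2 (ae_of_all _ fun t (ht : 1 < t) ↦ ?_)
  rw [norm_of_nonneg (by positivity), smul_eq_mul]
  exact inv_le_two_rpow_mul_pow_mul_one_add_sq_rpow finrank_pos ht.le

theorem exists_le_setIntegral_ball_of_not_integrable {α : Type*} [PseudoMetricSpace α]
    [MeasurableSpace α] [OpensMeasurableSpace α] {ν : Measure α} {g : α → ℝ} (x : α)
    (hg0 : 0 ≤ᵐ[ν] g) (hloc : ∀ R, IntegrableOn g (ball x R) ν) (hg : ¬ Integrable g ν)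
    (M : ℝ) : ∃ R, M ≤ ∫ y in ball x R, g y ∂ν := by
  by_contra! H
  exact hg <| (aecover_ball tendsto_id).integrable_of_integral_bounded_of_nonneg_ae M hloc hg0
    (Eventually.of_forall fun R ↦ (H R).le)

theorem integral_mul_comp_inv_smul_sub {E : Type*} [NormedAddCommGroup E] [NormedSpace ℝ E]
    [MeasurableSpace E] [BorelSpace E] [FiniteDimensional ℝ E] (ν : Measure E)
    [ν.IsAddHaarMeasure] (f g : E → ℝ) (ξ : E) {μ : ℝ} (hμ : 0 < μ) :
    ∫ x, f x * g (μ⁻¹ • (x - ξ)) ∂ν = μ ^ finrank ℝ E * ∫ y, f (ξ + μ • y) * g y ∂ν := by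
  have hcomp : ∀ x, f x * g (μ⁻¹ • (x - ξ)) = f (ξ + μ • μ⁻¹ • (x - ξ)) * g (μ⁻¹ • (x - ξ)) :=
    fun x ↦ by rw [smul_inv_smul₀ hμ.ne', add_sub_cancel]
  simp_rw [hcomp]
  rw [integral_sub_right_eq_self (fun z ↦ f (ξ + μ • μ⁻¹ • z) * g (μ⁻¹ • z)) ξ,
    Measure.integral_comp_smul ν (fun y ↦ f (ξ + μ • y) * g y) μ⁻¹, inv_pow, inv_inv,
    abs_of_pos (by positivity), smul_eq_mul]

theorem integrable_comp_add_smul_mul_of_hasCompactSupport {E : Type*} [NormedAddCommGroup E]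
    [NormedSpace ℝ E] [MeasurableSpace E] [OpensMeasurableSpace E] {ν : Measure E}
    [IsFiniteMeasureOnCompacts ν] {h g : E → ℝ} (hh : Continuous h) (hsupp : HasCompactSupport h)
    (hg : Continuous g) (ξ : E) {μ : ℝ} (hμ : μ ≠ 0) :
    Integrable (fun y ↦ h (ξ + μ • y) * g y) ν :=
  ((hh.comp (by fun_prop)).mul hg).integrable_of_hasCompactSupport
    (hsupp.comp_homeomorph ((Homeomorph.smulOfNeZero μ hμ).trans (Homeomorph.addLeft ξ))).mul_right

theorem tendsto_integral_comp_add_smul_mul_atTop {E : Type*} [NormedAddCommGroup E]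
    [NormedSpace ℝ E] [ProperSpace E] [MeasurableSpace E] [OpensMeasurableSpace E] {ν : Measure E}
    {h g : E → ℝ} {ξ : E}
    (hh : ContinuousAt h ξ) (hξ : 0 < h ξ) (hh0 : ∀ x, 0 ≤ h x) (hg0 : ∀ y, 0 ≤ g y)
    (hloc : LocallyIntegrable g ν) (hg : ¬ Integrable g ν)
    (hint : ∀ μ : ℝ, 0 < μ → Integrable (fun y ↦ h (ξ + μ • y) * g y) ν) :
    Tendsto (fun μ : ℝ ↦ ∫ y, h (ξ + μ • y) * g y ∂ν) (nhdsWithin 0 (Ioi 0)) atTop := by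
  rw [Filter.tendsto_atTop]
  intro M
  obtain ⟨δ, hδ, hδh⟩ := Metric.eventually_nhds_iff.1 (hh.eventually_const_lt (half_lt_self hξ))
  have hball : ∀ R, IntegrableOn g (ball 0 R) ν := fun R ↦
    (hloc.integrableOn_isCompact (isCompact_closedBall 0 R)).mono_set ball_subset_closedBall
  obtain ⟨R, hR⟩ := exists_le_setIntegral_ball_of_not_integrable 0 (ae_of_all _ hg0) hball hg
    (2 * M / h ξ)
  have hsmall : ∀ᶠ μ in nhdsWithin (0 : ℝ) (Ioi 0), μ * R < δ := by
    refine nhdsWithin_le_nhds ?_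
    exact ((continuous_id.mul continuous_const).tendsto' 0 0 (zero_mul R)).eventually
      (gt_mem_nhds hδ)
  filter_upwards [hsmall, self_mem_nhdsWithin] with μ hμR (hμ : 0 < μ)
  have hlower : ∀ y ∈ ball (0 : E) R, h ξ / 2 * g y ≤ h (ξ + μ • y) * g y := by
    intro y hy
    refine mul_le_mul_of_nonneg_right (hδh ?_).le (hg0 y)
    rw [dist_eq_norm, add_sub_cancel_left, norm_smul, norm_of_nonneg hμ.le]
    rw [mem_ball_zero_iff] at hy
    nlinarith
  calc M = h ξ / 2 * (2 * M / h ξ) := by field_simp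
    _ ≤ h ξ / 2 * ∫ y in ball 0 R, g y ∂ν := by gcongr
    _ = ∫ y in ball 0 R, h ξ / 2 * g y ∂ν := (integral_const_mul _ _).symm
    _ ≤ ∫ y in ball 0 R, h (ξ + μ • y) * g y ∂ν :=
        setIntegral_mono_on ((hball R).const_mul _) (hint μ hμ).integrableOn measurableSet_ball
          hlower
    _ ≤ ∫ y, h (ξ + μ • y) * g y ∂ν :=
        setIntegral_le_integral (hint μ hμ) (ae_of_all _ fun y ↦ mul_nonneg (hh0 _) (hg0 y))

theorem stmt14_general (d : ℕ) (s q α : ℝ) (hn : 2 * s < (d : ℝ))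
    (hq : 0 < q) (hq' : q ≤ 2 * s / ((d : ℝ) - 2 * s)) (hα : 0 < α)
    (h : EuclideanSpace ℝ (Fin d) → ℝ) (hc : Continuous h) (hsupp : HasCompactSupport h)
    (hnonneg : ∀ x, 0 ≤ h x)
    (ξ₀ : EuclideanSpace ℝ (Fin d)) (hpos : 0 < h ξ₀) :
    Filter.Tendsto
      (fun μ : ℝ =>
        (μ ^ (-(((d : ℝ) - 2 * s) * (q + 1) / 2)) / (q + 1) *
          ∫ x, h x * (α * (1 + ‖μ⁻¹ • (x - ξ₀)‖ ^ 2) ^ (-((d : ℝ) - 2 * s) / 2)) ^ (q + 1)) /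
          μ ^ ((d : ℝ) - ((d : ℝ) - 2 * s) * (q + 1) / 2))
      (nhdsWithin 0 (Set.Ioi 0)) Filter.atTop := by
  have hd2s : 0 < (d : ℝ) - 2 * s := by linarith
  have hq1 : 0 < q + 1 := by linarith
  have hr : ((d : ℝ) - 2 * s) * (q + 1) ≤ d := by
    have := (le_div_iff₀ hd2s).1 hq'
    nlinarith
  -- makes `EuclideanSpace ℝ (Fin d)` nontrivial
  have : NeZero d := ⟨by exact_mod_cast ((mul_pos hd2s hq1).trans_le hr).ne'⟩
  set G : EuclideanSpace ℝ (Fin d) → ℝ :=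
    fun y ↦ (α * (1 + ‖y‖ ^ 2) ^ (-((d : ℝ) - 2 * s) / 2)) ^ (q + 1) with hGdef
  have hG : G = fun y ↦ α ^ (q + 1) * (1 + ‖y‖ ^ 2) ^ (-(((d : ℝ) - 2 * s) * (q + 1)) / 2) := by
    ext y
    simp only [hGdef]
    rw [mul_rpow hα.le (by positivity), ← rpow_mul (by positivity)]
    ring_nf
  have hGcont : Continuous G := by
    rw [hG]
    exact continuous_const.mul ((by fun_prop : Continuous fun y : EuclideanSpace ℝ (Fin d) ↦
      1 + ‖y‖ ^ 2).rpow_const fun _ ↦ Or.inl (by positivity))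
  have hGint : ¬ Integrable G := by
    rw [hG, integrable_const_mul_iff (rpow_pos_of_pos hα _).ne'.isUnit]
    exact not_integrable_rpow_neg_one_add_norm_sq volume (by rwa [finrank_euclideanSpace_fin])
  refine ((tendsto_integral_comp_add_smul_mul_atTop hc.continuousAt hpos hnonneg
    (fun y ↦ by positivity) hGcont.locallyIntegrable hGint fun μ hμ ↦
      integrable_comp_add_smul_mul_of_hasCompactSupport hc hsupp hGcont ξ₀ hμ.ne').atTop_div_const
    hq1).congr' ?_
  filter_upwards [self_mem_nhdsWithin] with μ (hμ : 0 < μ)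
  rw [integral_mul_comp_inv_smul_sub volume h G ξ₀ hμ, finrank_euclideanSpace_fin]
  have hscale : μ ^ (-(((d : ℝ) - 2 * s) * (q + 1) / 2)) * μ ^ d =
      μ ^ ((d : ℝ) - ((d : ℝ) - 2 * s) * (q + 1) / 2) := by
    rw [← rpow_natCast, ← rpow_add hμ]
    ring_nf
  rw [div_mul_eq_mul_div, ← mul_assoc, hscale]
  field_simp

/-- If `0 < q ≤ 2s/(n−2s)`, `h ≥ 0` and `h(ξ₀) > 0`, then
`Γ(μ,ξ₀)/μ^{n−γ_s} → +∞` as `μ → 0⁺`. -/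
theorem stmt14 (d : ℕ) (s q α : ℝ) (hs : 0 < s) (hn : 2 * s < (d : ℝ))
    (hq : 0 < q) (hq' : q ≤ 2 * s / ((d : ℝ) - 2 * s)) (hα : 0 < α)
    (h : EuclideanSpace ℝ (Fin d) → ℝ) (hc : Continuous h) (hsupp : HasCompactSupport h)
    (hnonneg : ∀ x, 0 ≤ h x)
    (ξ₀ : EuclideanSpace ℝ (Fin d)) (hpos : 0 < h ξ₀) :
    Filter.Tendsto
      (fun μ : ℝ =>
        (μ ^ (-(((d : ℝ) - 2 * s) * (q + 1) / 2)) / (q + 1) *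
          ∫ x, h x * (α * (1 + ‖μ⁻¹ • (x - ξ₀)‖ ^ 2) ^ (-((d : ℝ) - 2 * s) / 2)) ^ (q + 1)) /
          μ ^ ((d : ℝ) - ((d : ℝ) - 2 * s) * (q + 1) / 2))
      (nhdsWithin 0 (Set.Ioi 0)) Filter.atTop :=
  stmt14_general d s q α hn hq hq' hα h hc hsupp hnonneg ξ₀ hpos
end
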